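/- Suppose Assumption 1 (full rank) holds and that there exist real coefficients c_{i,d} ≥ 1 (one for each pair (i,d) with i ∈ {1,…,n} and d ∈ B_i) such that ∑_{i=1}^n ∑_{d∈B_i} c_{i,d} v_{i,d} = 0. Then Assumption 2 (no separation) holds, i.e., there is no nonzero β* ∈ ℝ^p with v_{i,d}'β* ≥ 0 for all i and all d ∈ B_i. (One direction of Theorem 2.) -/

import Mathlib

open scoped BigOperators RealInnerProductSpace

noncomputable section

/-- Real value of a binary indicator. -/
def bval (b : Bool) : ℝ := if b then 1 else 0

/-- The alternative set `B_i = {d ∈ {0,1}^T : ∑_t d_t = ∑_t Y_{it}}`. -/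
def altSet (T : ℕ) (Yi : Fin T → Bool) : Finset (Fin T → Bool) :=
  Finset.univ.filter fun d => (∑ t, (d t).toNat) = ∑ t, (Yi t).toNat

/-- The conditional log-likelihood `log L(β)`. -/
def logL {n T p : ℕ} (X : Fin n → Fin T → EuclideanSpace ℝ (Fin p))
    (Y : Fin n → Fin T → Bool) (β : EuclideanSpace ℝ (Fin p)) : ℝ :=
  ∑ i, ((∑ t, bval (Y i t) * ⟪X i t, β⟫) -
    Real.log (∑ d ∈ altSet T (Y i), Real.exp (∑ t, bval (d t) * ⟪X i t, β⟫)))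

/-- The conditional-logit (softmax) weights `w_i(d; β)`. -/
def cweight {n T p : ℕ} (X : Fin n → Fin T → EuclideanSpace ℝ (Fin p))
    (Y : Fin n → Fin T → Bool) (i : Fin n) (d : Fin T → Bool)
    (β : EuclideanSpace ℝ (Fin p)) : ℝ :=
  Real.exp (∑ t, bval (d t) * ⟪X i t, β⟫) /
    ∑ f ∈ altSet T (Y i), Real.exp (∑ t, bval (f t) * ⟪X i t, β⟫)

/-- Row index set of the matrix in Assumption 1: pairs `(i, d)` with `d ∈ B_i`. -/
abbrev RowIdx (n T : ℕ) (Y : Fin n → Fin T → Bool) :=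
  (i : Fin n) × {d : Fin T → Bool // d ∈ altSet T (Y i)}

/-- The matrix of Assumption 1, evaluated at `β`. -/
def rowMat {n T p : ℕ} (X : Fin n → Fin T → EuclideanSpace ℝ (Fin p))
    (Y : Fin n → Fin T → Bool) (β : EuclideanSpace ℝ (Fin p)) :
    Matrix (RowIdx n T Y) (Fin p) ℝ :=
  fun r k =>
    (∑ t, bval (r.2.1 t) * X r.1 t k) -
      ∑ e ∈ altSet T (Y r.1),
        cweight X Y r.1 e β * ∑ t, bval (e t) * X r.1 t k

/-- Assumption 1 (full rank). -/
def Assumption1 {n T p : ℕ} (X : Fin n → Fin T → EuclideanSpace ℝ (Fin p))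
    (Y : Fin n → Fin T → Bool) : Prop :=
  ∀ β : EuclideanSpace ℝ (Fin p), (rowMat X Y β).rank = p

/-- Assumption 2 (no separation). -/
def Assumption2 {n T p : ℕ} (X : Fin n → Fin T → EuclideanSpace ℝ (Fin p))
    (Y : Fin n → Fin T → Bool) : Prop :=
  ¬ ∃ βstar : EuclideanSpace ℝ (Fin p), βstar ≠ 0 ∧
      ∀ i, ∀ d ∈ altSet T (Y i),
        0 ≤ ∑ t, (bval (d t) - bval (Y i t)) * ⟪X i t, βstar⟫

/-- The vectors `v_{i,d} = ∑_t (d_t − Y_{it}) X_{it}`. -/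
def vvec {n T p : ℕ} (X : Fin n → Fin T → EuclideanSpace ℝ (Fin p))
    (Y : Fin n → Fin T → Bool) (i : Fin n) (d : Fin T → Bool) :
    EuclideanSpace ℝ (Fin p) :=
  ∑ t, (bval (d t) - bval (Y i t)) • X i t

/-!
If `β ≠ 0` separated, every `⟪v_{i,d}, β⟫` would be nonnegative, and a positive combination of
them vanishes, so all of them vanish: the index `∑_t d_t X_{it}'β` is constant on each `B_i`.
Since the weights `w_i(·; β)` sum to one, each row of the matrix of Assumption 1 at `β` is then
orthogonal to `β`, so this full-rank matrix kills the nonzero vector `β`.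
-/

open scoped Matrix

theorem Matrix.eq_zero_of_mulVec_eq_zero_of_rank_eq_card {m n K : Type*} [Fintype n] [Field K]
    {A : Matrix m n K} (hA : A.rank = Fintype.card n) {v : n → K} (hv : A *ᵥ v = 0) :
    v = 0 := by
  have hker : Module.finrank K (LinearMap.ker A.mulVecLin) = 0 := by
    have := A.mulVecLin.finrank_range_add_finrank_ker
    rw [← Matrix.rank, hA, Module.finrank_fintype_fun_eq_card] at this
    omega
  exact Matrix.ker_mulVecLin_eq_bot_iff.mp (Submodule.finrank_eq_zero.mp hker) v hv

theorem inner_eq_zero_of_sum_smul_eq_zero {ι E : Type*} [Fintype ι]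
    [NormedAddCommGroup E] [InnerProductSpace ℝ E] {v : ι → E} {c : ι → ℝ}
    (hc : ∀ j, 0 < c j) (hsum : ∑ j, c j • v j = 0) {β : E} (hβ : ∀ j, 0 ≤ ⟪v j, β⟫)
    (j : ι) : ⟪v j, β⟫ = 0 := by
  have hzero : ∑ j, c j * ⟪v j, β⟫ = 0 := by
    simpa only [sum_inner, real_inner_smul_left, inner_zero_left] using
      congrArg (⟪·, β⟫) hsum
  have := (Finset.sum_eq_zero_iff_of_nonneg fun j _ => mul_nonneg (hc j).le (hβ j)).mp
    hzero j (Finset.mem_univ j)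
  exact (mul_eq_zero.mp this).resolve_left (hc j).ne'

def linIndex {n T p : ℕ} (X : Fin n → Fin T → EuclideanSpace ℝ (Fin p)) (i : Fin n)
    (d : Fin T → Bool) (β : EuclideanSpace ℝ (Fin p)) : ℝ :=
  ∑ t, bval (d t) * ⟪X i t, β⟫

section Model

variable {n T p : ℕ} (X : Fin n → Fin T → EuclideanSpace ℝ (Fin p)) (Y : Fin n → Fin T → Bool)

theorem inner_vvec (i : Fin n) (d : Fin T → Bool) (β : EuclideanSpace ℝ (Fin p)) :
    ⟪vvec X Y i d, β⟫ = ∑ t, (bval (d t) - bval (Y i t)) * ⟪X i t, β⟫ := by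
  simp only [vvec, sum_inner, real_inner_smul_left]

theorem inner_vvec_eq_linIndex_sub (i : Fin n) (d : Fin T → Bool)
    (β : EuclideanSpace ℝ (Fin p)) :
    ⟪vvec X Y i d, β⟫ = linIndex X i d β - linIndex X i (Y i) β := by
  simp only [inner_vvec, linIndex, ← Finset.sum_sub_distrib, sub_mul]

theorem self_mem_altSet (Yi : Fin T → Bool) : Yi ∈ altSet T Yi := by
  simp [altSet]

theorem sum_cweight (i : Fin n) (β : EuclideanSpace ℝ (Fin p)) :
    ∑ e ∈ altSet T (Y i), cweight X Y i e β = 1 := by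
  simp only [cweight, ← Finset.sum_div]
  exact div_self (Finset.sum_pos (fun f _ => Real.exp_pos _) ⟨Y i, self_mem_altSet (Y i)⟩).ne'

theorem rowMat_mulVec_apply (β γ : EuclideanSpace ℝ (Fin p)) (r : RowIdx n T Y) :
    (rowMat X Y β *ᵥ γ) r = linIndex X r.1 r.2.1 γ -
      ∑ e ∈ altSet T (Y r.1), cweight X Y r.1 e β * linIndex X r.1 e γ := by
  have hlin (d : Fin T → Bool) :
      ∑ k, (∑ t, bval (d t) * X r.1 t k) * γ k = linIndex X r.1 d γ := by
    simp only [linIndex, PiLp.inner_apply, RCLike.inner_apply, conj_trivial, Finset.sum_mul,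
      Finset.mul_sum]
    rw [Finset.sum_comm]
    exact Finset.sum_congr rfl fun _ _ => Finset.sum_congr rfl fun _ _ => by ring
  simp only [Matrix.mulVec, dotProduct, rowMat, sub_mul, Finset.sum_sub_distrib, hlin]
  congr 1
  simp only [← hlin, Finset.mul_sum, Finset.sum_mul, mul_assoc]
  exact Finset.sum_comm

theorem rowMat_mulVec_eq_zero_of_linIndex_eq (β γ : EuclideanSpace ℝ (Fin p))
    (hγ : ∀ i, ∀ d ∈ altSet T (Y i), linIndex X i d γ = linIndex X i (Y i) γ) :
    rowMat X Y β *ᵥ γ = 0 := by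
  funext r
  rw [rowMat_mulVec_apply, Finset.sum_congr rfl fun e he => by rw [hγ r.1 e he],
    ← Finset.sum_mul, sum_cweight, one_mul, hγ r.1 r.2.1 r.2.2, Pi.zero_apply, sub_self]

end Model

theorem stmt4_general {n T p : ℕ}
    (X : Fin n → Fin T → EuclideanSpace ℝ (Fin p)) (Y : Fin n → Fin T → Bool)
    (h1 : Assumption1 X Y)
    (c : RowIdx n T Y → ℝ) (hc : ∀ j, 1 ≤ c j)
    (hsum : ∑ j : RowIdx n T Y, c j • vvec X Y j.1 j.2.1 = 0) :
    Assumption2 X Y := by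
  rintro ⟨β, hβ, hsep⟩
  have hinner (j : RowIdx n T Y) : ⟪vvec X Y j.1 j.2.1, β⟫ = 0 :=
    inner_eq_zero_of_sum_smul_eq_zero (fun j => one_pos.trans_le (hc j)) hsum
      (fun j => (inner_vvec X Y _ _ β).symm ▸ hsep j.1 j.2.1 j.2.2) j
  have hkernel : rowMat X Y β *ᵥ β = 0 :=
    rowMat_mulVec_eq_zero_of_linIndex_eq X Y β β fun i d hd =>
      sub_eq_zero.mp ((inner_vvec_eq_linIndex_sub X Y i d β).symm.trans (hinner ⟨i, d, hd⟩))
  exact hβ ((WithLp.ofLp_eq_zero 2).mp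
    (Matrix.eq_zero_of_mulVec_eq_zero_of_rank_eq_card (by simpa using h1 β) hkernel))

/-- One direction of Theorem 2: coefficients `c_{i,d} ≥ 1` summing the `v_{i,d}` to zero
imply no separation. -/
theorem stmt4 {n T p : ℕ} (hn : 1 ≤ n) (hT : 1 ≤ T) (hp : 1 ≤ p)
    (X : Fin n → Fin T → EuclideanSpace ℝ (Fin p)) (Y : Fin n → Fin T → Bool)
    (h1 : Assumption1 X Y)
    (c : RowIdx n T Y → ℝ) (hc : ∀ j, 1 ≤ c j)
    (hsum : ∑ j : RowIdx n T Y, c j • vvec X Y j.1 j.2.1 = 0) :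
    Assumption2 X Y :=
  stmt4_general X Y h1 c hc hsum
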